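/- The parametric zone graph of an extended 1-clock PTA (1cPTA) is finite: a 1cPTA has only finitely many reachable symbolic states. -/

import Mathlib

namespace PTAPaper

/-- Comparison operators `<, ≤, =, ≥, >`. -/
inductive Cmp : Type
  | lt
  | le
  | eq
  | ge
  | gt

/-- Semantics of a comparison operator on the reals. -/
def Cmp.holds : Cmp → ℝ → ℝ → Prop
  | .lt, a, b => a < b
  | .le, a, b => a ≤ b
  | .eq, a, b => a = b
  | .ge, a, b => b ≤ a
  | .gt, a, b => b < a

/-- A parametric linear term `Σᵢ αᵢ pᵢ + c` over parameters `P`. -/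
structure LinTerm (P : Type) : Type where
  coef : P → ℤ
  const : ℤ

/-- Evaluation of a parametric linear term at a parameter valuation. -/
def LinTerm.eval {P : Type} [Fintype P] (t : LinTerm P) (ρ : P → ℝ) : ℝ :=
  (∑ p, (t.coef p : ℝ) * ρ p) + (t.const : ℝ)

/-- The zero linear term. -/
def zeroTerm (P : Type) : LinTerm P := ⟨fun _ => 0, 0⟩

/-- A guard or invariant of an extended 1-clock PTA: a conjunction of
constraints `x ⋈ lt` on the (unique) clock `x`. -/
abbrev OCConstraint (P : Type) := List (Cmp × LinTerm P)

def OCConstraint.sat {P : Type} [Fintype P] (x : ℝ) (ρ : P → ℝ)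
    (g : OCConstraint P) : Prop :=
  ∀ a ∈ g, a.1.holds x (a.2.eval ρ)

/-- An edge of an extended 1-clock PTA; `reset` tells whether the clock is reset. -/
structure OCEdge (σ L P : Type) : Type where
  src : L
  guard : OCConstraint P
  act : σ
  reset : Bool
  dst : L

/-- An extended 1-clock PTA (1cPTA): a PTA with a single clock, whose guards
and invariants compare the clock with parametric linear terms. -/
structure OCPTA (σ L P : Type) : Type where
  init : L
  inv : L → OCConstraint P
  edges : List (OCEdge σ L P)

/-- The parametric linear terms occurring in the guards and invariants of `A`. -/
def OCPTA.terms {σ L P : Type} (A : OCPTA σ L P) : Set (LinTerm P) :=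
  {t | (∃ l, ∃ a ∈ A.inv l, a.2 = t) ∨ (∃ e ∈ A.edges, ∃ a ∈ e.guard, a.2 = t)}

/-- A (semantic) zone over the single clock and the parameters. -/
abbrev Zone1 (P : Type) := Set (ℝ × (P → ℝ))

/-- Projection of a zone onto the parameters. -/
def Zone1.projP {P : Type} (Z : Zone1 P) : Set (P → ℝ) := {ρ | ∃ x, (x, ρ) ∈ Z}

/-- Time elapsing of a zone. -/
def Zone1.elapse {P : Type} (Z : Zone1 P) : Zone1 P :=
  {xρ | ∃ x d, 0 ≤ d ∧ (x, xρ.2) ∈ Z ∧ xρ.1 = x + d}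

/-- Resetting the clock in a zone (when `b = true`). -/
def Zone1.reset {P : Type} (b : Bool) (Z : Zone1 P) : Zone1 P :=
  if b then {xρ | ∃ x, (x, xρ.2) ∈ Z ∧ xρ.1 = 0} else Z

/-- The zone defined by a constraint. -/
def ocZone {P : Type} [Fintype P] (g : OCConstraint P) : Zone1 P :=
  {xρ | OCConstraint.sat xρ.1 xρ.2 g}

/-- The initial symbolic state `(l₀, (x = 0)↗ ∧ I(l₀))`. -/
def initSym1 {σ L P : Type} [Fintype P] (A : OCPTA σ L P) : L × Zone1 P :=
  (A.init, Zone1.elapse {xρ | xρ.1 = 0} ∩ ocZone (A.inv A.init))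

/-- Successor of a symbolic state via some edge:
`(l', ((C ∧ g)[R←0])↗ ∧ I(l'))`, when nonempty. -/
def OCSucc {σ L P : Type} [Fintype P] (A : OCPTA σ L P)
    (s s' : L × Zone1 P) : Prop :=
  ∃ e ∈ A.edges, e.src = s.1 ∧ s'.1 = e.dst ∧
    s'.2 = Zone1.elapse (Zone1.reset e.reset (s.2 ∩ ocZone e.guard)) ∩
        ocZone (A.inv e.dst) ∧
    s'.2.Nonempty

/-- The reachable symbolic states of the parametric zone graph of `A`
(symbolic states with the same location and the same set of satisfying
valuations are identified). -/
inductive OCReach {σ L P : Type} [Fintype P] (A : OCPTA σ L P) :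
    (L × Zone1 P) → Prop
  | init : OCReach A (initSym1 A)
  | succ {s s' : L × Zone1 P} : OCReach A s → OCSucc A s s' → OCReach A s'

/-! Call two valuations `(x, ρ)` and `(x', ρ')` equivalent when the clock value and the values
of the finitely many terms of `A`, together with `0`, appear in the same relative order. There
are finitely many classes, so it suffices that every reachable zone is a union of classes. This
is clear for constraint zones and for `x = 0`, and it is preserved by time elapsing and reset:
when the terms are in the same order at `ρ` and at `ρ'`, every position of a clock value relative
to the terms at `ρ` is realised relative to the terms at `ρ'`, since a dense order without
endpoints has a point strictly between any two finite sets. -/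

section OrderType

variable {ι α : Type*} [LinearOrder α]

def orderType (f : ι → α) : ι → ι → Ordering := fun i j => compare (f i) (f j)

theorem exists_compare_eq_of_orderType_eq [Finite ι] [DenselyOrdered α] [NoMinOrder α]
    [NoMaxOrder α] {f g : ι → α} (h : orderType f = orderType g) (y : α) :
    ∃ y', ∀ i, compare y' (g i) = compare y (f i) := by
  by_cases hy : ∃ i, f i = y
  · obtain ⟨i, rfl⟩ := hy
    exact ⟨g i, fun j => (congrFun₂ h i j).symm⟩
  push Not at hy
  have := Fintype.ofFinite ι
  have : Nonempty α := ⟨y⟩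
  have hlt : ∀ i j, f i < f j → g i < g j := fun i j hij => by
    have hij' := congrFun₂ h i j
    rw [orderType, orderType, compare_lt_iff_lt.2 hij] at hij'
    exact compare_lt_iff_lt.1 hij'.symm
  obtain ⟨y', hbelow, habove⟩ := Finset.exists_between'
    (({i | f i < y} : Finset ι).image g) (({i | y < f i} : Finset ι).image g) (by
      simp only [Finset.mem_image, Finset.mem_filter, Finset.mem_univ, true_and]
      rintro _ ⟨i, hi, rfl⟩ _ ⟨j, hj, rfl⟩
      exact hlt i j (hi.trans hj))
  refine ⟨y', fun i => ?_⟩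
  rcases (hy i).lt_or_gt with hi | hi
  · have hgi : g i < y' := hbelow _ (Finset.mem_image_of_mem g (by simpa using hi))
    rw [compare_gt_iff_gt.2 hi, compare_gt_iff_gt.2 hgi]
  · have hgi : y' < g i := habove _ (Finset.mem_image_of_mem g (by simpa using hi))
    rw [compare_lt_iff_lt.2 hi, compare_lt_iff_lt.2 hgi]

theorem exists_orderType_option_elim_eq [Finite ι] [DenselyOrdered α] [NoMinOrder α]
    [NoMaxOrder α] {f g : ι → α} (h : orderType f = orderType g) (y : α) :
    ∃ y', orderType (fun o : Option ι => o.elim y' g) =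
      orderType (fun o : Option ι => o.elim y f) := by
  obtain ⟨y', hy'⟩ := exists_compare_eq_of_orderType_eq h y
  refine ⟨y', funext₂ fun o o' => ?_⟩
  rcases o with _ | i <;> rcases o' with _ | j
  · exact (compare_eq_iff_eq.2 rfl).trans (compare_eq_iff_eq.2 rfl).symm
  · exact hy' j
  · exact Std.OrientedOrd.eq_swap.trans
      ((congrArg Ordering.swap (hy' i)).trans Std.OrientedOrd.eq_swap.symm)
  · exact (congrFun₂ h i j).symm

end OrderType

lemma Cmp.holds_of_compare_eq {c : Cmp} {a b a' b' : ℝ} (h : compare a b = compare a' b')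
    (hab : c.holds a b) : c.holds a' b' := by
  cases c
  · exact compare_lt_iff_lt.1 (h ▸ compare_lt_iff_lt.2 hab)
  · exact compare_le_iff_le.1 (h ▸ compare_le_iff_le.2 hab)
  · exact compare_eq_iff_eq.1 (h ▸ compare_eq_iff_eq.2 hab)
  · exact compare_ge_iff_ge.1 (h ▸ compare_ge_iff_ge.2 hab)
  · exact compare_gt_iff_gt.1 (h ▸ compare_gt_iff_gt.2 hab)

section Signature

variable {P : Type} [Fintype P] (T : Set (LinTerm P))

noncomputable def clockAndTerms (a : ℝ × (P → ℝ)) : Option T → ℝ :=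
  fun o => o.elim a.1 fun t => t.1.eval a.2

noncomputable def signature (a : ℝ × (P → ℝ)) : Option T → Option T → Ordering :=
  orderType (clockAndTerms T a)

def IsSaturated (Z : Zone1 P) : Prop :=
  ∀ a b, signature T a = signature T b → a ∈ Z → b ∈ Z

variable {T}

theorem IsSaturated.eq_preimage_image {Z : Zone1 P} (hZ : IsSaturated T Z) :
    Z = signature T ⁻¹' (signature T '' Z) :=
  Set.Subset.antisymm (Set.subset_preimage_image _ _) fun _ ⟨a, ha, hab⟩ => hZ a _ hab ha

theorem finite_setOf_isSaturated [Finite T] : {Z : Zone1 P | IsSaturated T Z}.Finite :=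
  (Set.finite_range fun S => signature T ⁻¹' S).subset
    fun _ hZ => ⟨_, hZ.eq_preimage_image.symm⟩

theorem IsSaturated.inter {Z Z' : Zone1 P} (hZ : IsSaturated T Z) (hZ' : IsSaturated T Z') :
    IsSaturated T (Z ∩ Z') :=
  fun a b hab ha => ⟨hZ a b hab ha.1, hZ' a b hab ha.2⟩

theorem isSaturated_ocZone {g : OCConstraint P} (hg : ∀ c ∈ g, c.2 ∈ T) :
    IsSaturated T (ocZone g) :=
  fun _ _ hab ha c hc =>
    Cmp.holds_of_compare_eq (congrFun₂ hab none (some ⟨c.2, hg c hc⟩)) (ha c hc)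

theorem clock_eq_zero_of_signature_eq (h0 : zeroTerm P ∈ T) {a b : ℝ × (P → ℝ)}
    (hab : signature T a = signature T b) (ha : a.1 = 0) : b.1 = 0 := by
  have hzero : ∀ ρ : P → ℝ, (zeroTerm P).eval ρ = 0 := fun ρ => by
    simp [zeroTerm, LinTerm.eval]
  have := congrFun₂ hab none (some ⟨zeroTerm P, h0⟩)
  simp only [signature, orderType, clockAndTerms, Option.elim, hzero, ha] at this
  exact compare_eq_iff_eq.1 (this.symm.trans (compare_eq_iff_eq.2 rfl))

theorem isSaturated_clock_eq_zero (h0 : zeroTerm P ∈ T) :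
    IsSaturated T {a : ℝ × (P → ℝ) | a.1 = 0} :=
  fun _ _ hab ha => clock_eq_zero_of_signature_eq h0 hab ha

theorem exists_signature_eq_of_signature_eq [Finite T] {a b : ℝ × (P → ℝ)}
    (hab : signature T a = signature T b) (y : ℝ) :
    ∃ y', signature T (y', b.2) = signature T (y, a.2) ∧ compare y' b.1 = compare y a.1 := by
  obtain ⟨y', hy'⟩ := exists_orderType_option_elim_eq hab y
  refine ⟨y', funext₂ fun o o' => ?_, congrFun₂ hy' none (some none)⟩
  rcases o with _ | t <;> rcases o' with _ | t'
  exacts [congrFun₂ hy' none none, congrFun₂ hy' none (some (some t')),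
    congrFun₂ hy' (some (some t)) none, congrFun₂ hy' (some (some t)) (some (some t'))]

theorem IsSaturated.elapse [Finite T] {Z : Zone1 P} (hZ : IsSaturated T Z) :
    IsSaturated T Z.elapse := by
  rintro a b hab ⟨x, d, hd, hx, ha⟩
  obtain ⟨y, hsig, hcmp⟩ := exists_signature_eq_of_signature_eq hab x
  have hy : y ≤ b.1 := compare_le_iff_le.1 (hcmp ▸ compare_le_iff_le.2 (by linarith))
  exact ⟨y, b.1 - y, sub_nonneg.2 hy, hZ _ _ hsig.symm hx, by ring⟩

theorem IsSaturated.reset [Finite T] (h0 : zeroTerm P ∈ T) {Z : Zone1 P}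
    (hZ : IsSaturated T Z) (r : Bool) : IsSaturated T (Zone1.reset r Z) := by
  cases r
  · exact hZ
  · rintro a b hab ⟨x, hx, ha⟩
    obtain ⟨y, hsig, -⟩ := exists_signature_eq_of_signature_eq hab x
    exact ⟨y, hZ _ _ hsig.symm hx, clock_eq_zero_of_signature_eq h0 hab ha⟩

end Signature

section Automaton

variable {σ L P : Type}

theorem OCPTA.terms_finite [Finite L] (A : OCPTA σ L P) : A.terms.Finite := by
  have : A.terms = (⋃ l, Prod.snd '' {c | c ∈ A.inv l}) ∪
      ⋃ e ∈ {e | e ∈ A.edges}, Prod.snd '' {c | c ∈ e.guard} := by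
    ext t
    simp [OCPTA.terms]
  rw [this]
  exact (Set.finite_iUnion fun l => (List.finite_toSet _).image _).union
    (A.edges.finite_toSet.biUnion fun e _ => (List.finite_toSet _).image _)

def OCPTA.termsWithZero (A : OCPTA σ L P) : Set (LinTerm P) := insert (zeroTerm P) A.terms

instance [Finite L] (A : OCPTA σ L P) : Finite A.termsWithZero :=
  (A.terms_finite.insert _).to_subtype

theorem isSaturated_of_reach [Fintype P] [Finite L] (A : OCPTA σ L P) {s : L × Zone1 P}
    (hs : OCReach A s) : IsSaturated A.termsWithZero s.2 := by
  have h0 : zeroTerm P ∈ A.termsWithZero := Set.mem_insert _ _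
  have hinv : ∀ l, IsSaturated A.termsWithZero (ocZone (A.inv l)) := fun l =>
    isSaturated_ocZone fun c hc => Set.mem_insert_of_mem _ (Or.inl ⟨l, c, hc, rfl⟩)
  induction hs with
  | init => exact (isSaturated_clock_eq_zero h0).elapse.inter (hinv A.init)
  | succ _ hsucc ih =>
    obtain ⟨e, he, -, -, hZ, -⟩ := hsucc
    have hguard : IsSaturated A.termsWithZero (ocZone e.guard) :=
      isSaturated_ocZone fun c hc => Set.mem_insert_of_mem _ (Or.inr ⟨e, he, c, hc, rfl⟩)
    rw [hZ]
    exact ((ih.inter hguard).reset h0 e.reset).elapse.inter (hinv e.dst)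

end Automaton

/-- **Finiteness of the parametric zone graph of a 1cPTA** (Theorem 26). An
extended 1-clock PTA has only finitely many reachable symbolic states. -/
theorem zone_graph_finite {σ L P : Type} [Fintype P] [Fintype L]
    (A : OCPTA σ L P) :
    {s : L × Zone1 P | OCReach A s}.Finite :=
  (Set.finite_univ.prod finite_setOf_isSaturated).subset
    fun s hs => ⟨Set.mem_univ s.1, isSaturated_of_reach A hs⟩

end PTAPaper
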